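/- Let h ∈ (0,1], α ∈ (0,1], τ > 0 and p ∈ [0,1) be real numbers, and let X be a real random variable whose distribution is the Gaussian measure on ℝ with mean μ_a = (1−h)·α·τ and variance σ_a² = (1−h)·α·τ·(1−p). If the real number θ satisfies θ > (1−h)·α + 6.36·√((1−h)·α/τ), then Pr(X ≥ θ·τ) < 2·10⁻¹⁰. (Theorem 2 of the paper: no fraudulent cross-chain message gathers θτ adversarial votes, stated under the paper's Normal approximation of the Binomial vote count of adversarial envoys.) -/

import Mathlib

/-!
Mills' ratio: on `x > c` one has `1 ≤ (x - μ) / (c - μ)`, and `(x - μ) · exp (-(x - μ)² / 2σ²)`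
has an explicit antiderivative, so `Pr(X ≥ c) ≤ σ / (√(2π) (c - μ)) · exp (-(c - μ)² / 2σ²)`
for `X ∼ N(μ, σ²)`. When `c - μ > 6.36 σ` this is below `e⁻²⁰ / (2.5 · 6.36) < 2·10⁻¹⁰`. Since
`σ² = (1-h)ατ(1-p) ≤ τ² · (1-h)α/τ`, the hypothesis on `θ` gives such a gap at `c = θτ`.
-/

open MeasureTheory ProbabilityTheory Real Filter Set
open scoped NNReal Topology

lemma integral_Ioi_sub_mul_exp_neg_mul_sub_sq {b : ℝ} (hb : 0 < b) (m c : ℝ) :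
    ∫ x in Ioi c, (x - m) * exp (-b * (x - m) ^ 2) = exp (-b * (c - m) ^ 2) / (2 * b) := by
  have hderiv : ∀ x ∈ Ici c, HasDerivAt (fun x ↦ -(2 * b)⁻¹ * exp (-b * (x - m) ^ 2))
      ((x - m) * exp (-b * (x - m) ^ 2)) x := by
    intro x _
    refine ((((hasDerivAt_id x).sub_const m).pow 2).const_mul (-b)).exp.const_mul
      (-(2 * b)⁻¹) |>.congr_deriv ?_
    simp only [Pi.pow_apply, id]
    field_simp
    norm_num
  have hlim : Tendsto (fun x ↦ -(2 * b)⁻¹ * exp (-b * (x - m) ^ 2)) atTop (𝓝 0) := by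
    have hsq : Tendsto (fun x : ℝ ↦ (x - m) ^ 2) atTop atTop :=
      (tendsto_pow_atTop two_ne_zero).comp (tendsto_atTop_add_const_right _ (-m) tendsto_id)
    simpa using
      (tendsto_exp_atBot.comp (hsq.const_mul_atTop_of_neg (neg_lt_zero.mpr hb))).const_mul
        (-(2 * b)⁻¹)
  rw [integral_Ioi_of_hasDerivAt_of_tendsto' hderiv
    ((integrable_mul_exp_neg_mul_sq hb).comp_sub_right m).integrableOn hlim]
  field_simp
  ring

lemma integral_Ioi_exp_neg_mul_sub_sq_le {b m c : ℝ} (hb : 0 < b) (hmc : m < c) :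
    ∫ x in Ioi c, exp (-b * (x - m) ^ 2) ≤ exp (-b * (c - m) ^ 2) / (2 * b * (c - m)) := by
  have hd : 0 < c - m := sub_pos.mpr hmc
  calc ∫ x in Ioi c, exp (-b * (x - m) ^ 2)
      ≤ ∫ x in Ioi c, (c - m)⁻¹ * ((x - m) * exp (-b * (x - m) ^ 2)) := by
        refine setIntegral_mono_on ((integrable_exp_neg_mul_sq hb).comp_sub_right m).integrableOn
          (((integrable_mul_exp_neg_mul_sq hb).comp_sub_right m).const_mul _).integrableOn
          measurableSet_Ioi fun x hx ↦ ?_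
        rw [← mul_assoc, inv_mul_eq_div]
        exact le_mul_of_one_le_left (exp_pos _).le
          ((one_le_div hd).mpr (sub_le_sub_right (le_of_lt hx) m))
    _ = exp (-b * (c - m) ^ 2) / (2 * b * (c - m)) := by
        rw [integral_const_mul, integral_Ioi_sub_mul_exp_neg_mul_sub_sq hb]
        field_simp

lemma gaussianReal_Ici_le (μ : ℝ) {v : ℝ≥0} (hv : v ≠ 0) {c : ℝ} (hc : μ < c) :
    gaussianReal μ v (Ici c) ≤
      ENNReal.ofReal (√v / (√(2 * π) * (c - μ)) * exp (-(c - μ) ^ 2 / (2 * v))) := by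
  have hv0 : (0 : ℝ) < v := by positivity
  have hb : 0 < (2 * (v : ℝ))⁻¹ := by positivity
  have hexp : ∀ y : ℝ, exp (-y ^ 2 / (2 * v)) = exp (-(2 * (v : ℝ))⁻¹ * y ^ 2) := fun y ↦ by
    ring_nf
  rw [gaussianReal_apply_eq_integral μ hv, integral_Ici_eq_integral_Ioi]
  refine ENNReal.ofReal_le_ofReal ?_
  simp_rw [gaussianPDFReal, integral_const_mul, hexp]
  calc (√(2 * π * v))⁻¹ * ∫ x in Ioi c, exp (-(2 * (v : ℝ))⁻¹ * (x - μ) ^ 2)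
      ≤ (√(2 * π * v))⁻¹ *
          (exp (-(2 * (v : ℝ))⁻¹ * (c - μ) ^ 2) / (2 * (2 * (v : ℝ))⁻¹ * (c - μ))) :=
        mul_le_mul_of_nonneg_left (integral_Ioi_exp_neg_mul_sub_sq_le hb hc) (by positivity)
    _ = √v / (√(2 * π) * (c - μ)) * exp (-(2 * (v : ℝ))⁻¹ * (c - μ) ^ 2) := by
        have hsv : √(v : ℝ) ^ 2 = v := sq_sqrt hv0.le
        rw [sqrt_mul (by positivity)]
        field_simp
        rw [hsv]

lemma exp_neg_twenty_lt : exp (-20) < (3.2e8 : ℝ)⁻¹ := by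
  rw [exp_neg]
  refine inv_strictAnti₀ (by norm_num) ?_
  calc (3.2e8 : ℝ) < 2.7182818283 ^ 20 := by norm_num
    _ ≤ exp 1 ^ 20 := pow_le_pow_left₀ (by norm_num) exp_one_gt_d9.le 20
    _ = exp 20 := by rw [← exp_nat_mul]; norm_num

lemma two_point_five_le_sqrt_two_mul_pi : (2.5 : ℝ) ≤ √(2 * π) :=
  le_sqrt_of_sq_le (by nlinarith [pi_gt_d6])

lemma gaussianReal_Ici_lt_of_gap (μ : ℝ) (v : ℝ≥0) {c : ℝ} (hgap : 6.36 * √v < c - μ) :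
    gaussianReal μ v (Ici c) < ENNReal.ofReal (2 / 10 ^ 10) := by
  rcases eq_or_ne v 0 with rfl | hv
  · rw [gaussianReal_zero_var, Measure.dirac_apply' _ measurableSet_Ici,
      indicator_of_notMem (by simp_all)]
    exact ENNReal.ofReal_pos.mpr (by norm_num)
  have hσ : 0 < √(v : ℝ) := sqrt_pos.mpr (by positivity)
  have hd : 0 < c - μ := lt_trans (by positivity) hgap
  have hratio : √v / (√(2 * π) * (c - μ)) ≤ 1 / (2.5 * 6.36) := by
    rw [div_le_div_iff₀ (by positivity) (by norm_num)]
    nlinarith [two_point_five_le_sqrt_two_mul_pi]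
  have htail : exp (-(c - μ) ^ 2 / (2 * v)) ≤ exp (-20) := by
    rw [exp_le_exp, neg_div, neg_le_neg_iff, le_div_iff₀ (by positivity),
      ← sq_sqrt (NNReal.coe_nonneg v)]
    nlinarith
  refine (gaussianReal_Ici_le μ hv (by linarith)).trans_lt
    ((ENNReal.ofReal_lt_ofReal_iff (by norm_num)).mpr ?_)
  calc √v / (√(2 * π) * (c - μ)) * exp (-(c - μ) ^ 2 / (2 * v))
      ≤ 1 / (2.5 * 6.36) * exp (-20) := mul_le_mul hratio htail (exp_pos _).le (by norm_num)
    _ < 1 / (2.5 * 6.36) * (3.2e8)⁻¹ := by gcongr; exact exp_neg_twenty_lt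
    _ < 2 / 10 ^ 10 := by norm_num

theorem eden_theorem_adversarial_general
    {Ω : Type*} [MeasurableSpace Ω] (P : Measure Ω)
    (h α τ p θ : ℝ)
    (hh : h ∈ Set.Ioc (0 : ℝ) 1) (hα : α ∈ Set.Ioc (0 : ℝ) 1)
    (hτ : 0 < τ) (hp : p ∈ Set.Ico (0 : ℝ) 1)
    (X : Ω → ℝ)
    (hX : P.map X = gaussianReal ((1 - h) * α * τ) ((1 - h) * α * τ * (1 - p)).toNNReal)
    (hθ : θ > (1 - h) * α + 6.36 * Real.sqrt ((1 - h) * α / τ)) :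
    P {ω | X ω ≥ θ * τ} < ENNReal.ofReal (2 / 10 ^ 10) := by
  have hlaw : HasLaw X (gaussianReal ((1 - h) * α * τ) ((1 - h) * α * τ * (1 - p)).toNNReal) P :=
    ⟨.of_map_ne_zero (by simp [hX, IsProbabilityMeasure.ne_zero]), hX⟩
  rw [hlaw.measure_eq measurableSet_Ici]
  refine gaussianReal_Ici_lt_of_gap _ _ ?_
  have hA : 0 ≤ (1 - h) * α := mul_nonneg (by linarith [hh.2]) hα.1.le
  have hσ : √(((1 - h) * α * τ * (1 - p)).toNNReal : ℝ) ≤ √((1 - h) * α / τ) * τ :=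
    calc √(((1 - h) * α * τ * (1 - p)).toNNReal : ℝ) ≤ √((1 - h) * α / τ * τ ^ 2) := by
          refine sqrt_le_sqrt (max_le ?_ (by positivity))
          rw [div_mul_eq_mul_div, sq, ← mul_assoc, mul_div_cancel_right₀ _ hτ.ne']
          nlinarith [hp.1, mul_nonneg hA hτ.le]
      _ = √((1 - h) * α / τ) * τ := by rw [sqrt_mul (div_nonneg hA hτ.le), sqrt_sq hτ.le]
  nlinarith

/-- Theorem 2 of the paper (under the Normal approximation): if
`θ > (1−h)·α + 6.36·√((1−h)·α/τ)`, then a Gaussian adversarial vote count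
`X ∼ N((1−h)ατ, (1−h)ατ(1−p))` satisfies `Pr(X ≥ θτ) < 2·10⁻¹⁰`. -/
theorem eden_theorem_adversarial
    {Ω : Type*} [MeasurableSpace Ω] (P : Measure Ω) [IsProbabilityMeasure P]
    (h α τ p θ : ℝ)
    (hh : h ∈ Set.Ioc (0 : ℝ) 1) (hα : α ∈ Set.Ioc (0 : ℝ) 1)
    (hτ : 0 < τ) (hp : p ∈ Set.Ico (0 : ℝ) 1)
    (X : Ω → ℝ)
    (hX : P.map X = gaussianReal ((1 - h) * α * τ) ((1 - h) * α * τ * (1 - p)).toNNReal)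
    (hθ : θ > (1 - h) * α + 6.36 * Real.sqrt ((1 - h) * α / τ)) :
    P {ω | X ω ≥ θ * τ} < ENNReal.ofReal (2 / 10 ^ 10) :=
  eden_theorem_adversarial_general P h α τ p θ hh hα hτ hp X hX hθ
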